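/- arXiv:2507.12097 — 3 statements merged into one kernel-verified Lean document; each statement's English description precedes it below -/
import Mathlib

section
/- For all natural numbers n and k with 2k+1 ≤ n and n ≥ 1, the identity (2k)!! / ∏_{j=0}^{k} (n - 2j) = ∑_{i=0}^{k} (-1)^i * C(k,i) / (n - 2k + 2i) holds (as an identity of rational numbers). -/
open Finset

lemma aux_dfsum : ∀ (k : ℕ) (x : ℚ), (∀ j ∈ Finset.range (k+1), x + 2*j ≠ 0) →
    ∑ i ∈ Finset.range (k+1), (-1)^i * (Nat.choose k i : ℚ) / (x + 2*i)
      = (Nat.doubleFactorial (2*k) : ℚ) / ∏ j ∈ Finset.range (k+1), (x + 2*j) := by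
  intro k
  induction k with
  | zero =>
    intro x hx
    simp [Nat.doubleFactorial]
  | succ k ih =>
    intro x hx
    have hx0 : x ≠ 0 := by simpa using hx 0 (by simp)
    have hx2 : ∀ j ∈ Finset.range (k+1), (x + 2) + 2*j ≠ 0 := by
      intro j hj
      have := hx (j+1) (by simp at hj ⊢; omega)
      push_cast at this ⊢
      intro hc; apply this; linarith
    have hxk : ∀ j ∈ Finset.range (k+1), x + 2*j ≠ 0 := by
      intro j hj; exact hx j (by simp at hj ⊢; omega)
    -- split the sum
    have hsum : ∑ i ∈ Finset.range (k+2), (-1)^i * (Nat.choose (k+1) i : ℚ) / (x + 2*i)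
        = (∑ i ∈ Finset.range (k+1), (-1)^i * (Nat.choose k i : ℚ) / (x + 2*i))
          - ∑ i ∈ Finset.range (k+1), (-1)^i * (Nat.choose k i : ℚ) / ((x+2) + 2*i) := by
      rw [Finset.sum_range_succ' (fun i => (-1)^i * (Nat.choose (k+1) i : ℚ) / (x + 2*i)) (k+1)]
      have e1 : ∀ i ∈ Finset.range (k+1),
          (-1)^(i+1) * (Nat.choose (k+1) (i+1) : ℚ) / (x + 2*((i+1 : ℕ) : ℚ))
          = (-((-1)^i * (Nat.choose k i : ℚ) / ((x+2) + 2*i)))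
            + (-1)^(i+1) * (Nat.choose k (i+1) : ℚ) / (x + 2*((i+1 : ℕ) : ℚ)) := by
        intro i hi
        rw [Nat.choose_succ_succ]
        push_cast
        ring
      rw [Finset.sum_congr rfl e1, Finset.sum_add_distrib, Finset.sum_neg_distrib]
      have e2 := Finset.sum_range_succ' (fun i => (-1)^i * (Nat.choose k i : ℚ) / (x + 2*i)) (k+1)
      have e3 := Finset.sum_range_succ (fun i => (-1)^i * (Nat.choose k i : ℚ) / (x + 2*i)) (k+1)
      simp only [Nat.choose_eq_zero_of_lt (by omega : k < k+1), Nat.cast_zero, mul_zero,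
        zero_div, add_zero, zero_mul, mul_zero] at e3
      rw [e3] at e2
      rw [show (∑ i ∈ Finset.range (k+1), (-1)^(i+1) * (Nat.choose k (i+1) : ℚ) / (x + 2*((i+1:ℕ):ℚ)))
          = (∑ i ∈ Finset.range (k+1), (-1)^i * (Nat.choose k i : ℚ) / (x + 2*i))
            - (-1)^0 * (Nat.choose k 0 : ℚ) / (x + 2*((0:ℕ):ℚ)) from by linarith [e2]]
      simp
      ring
    rw [hsum, ih x hxk, ih (x+2) hx2]
    -- products
    have hQ : ∏ j ∈ Finset.range (k+1), ((x+2) + 2*j)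
        = ∏ j ∈ Finset.range (k+1), (x + 2*((j+1:ℕ):ℚ)) := by
      apply Finset.prod_congr rfl; intro j _; push_cast; ring
    have h1 := Finset.prod_range_succ' (fun j => x + 2*(j:ℚ)) (k+1)
    have h2 := Finset.prod_range_succ (fun j => x + 2*(j:ℚ)) (k+1)
    rw [h1] at h2
    -- h2 : Q * (x + 2*↑0) = P * (x + 2*↑(k+1))
    have hrel : x * (∏ j ∈ Finset.range (k+1), (x + 2*((j+1:ℕ):ℚ)))
        = (∏ j ∈ Finset.range (k+1), (x + 2*j)) * (x + 2*((k+1:ℕ):ℚ)) := by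
      rw [← h2]; push_cast; ring
    have hP : (∏ j ∈ Finset.range (k+1), (x + 2*(j:ℚ))) ≠ 0 :=
      Finset.prod_ne_zero_iff.mpr hxk
    have hQ0 : (∏ j ∈ Finset.range (k+1), (x + 2*((j+1:ℕ):ℚ))) ≠ 0 := by
      rw [← hQ]; exact Finset.prod_ne_zero_iff.mpr hx2
    have hPP : (∏ j ∈ Finset.range (k+1+1), (x + 2*(j:ℚ)))
        = (∏ j ∈ Finset.range (k+1), (x + 2*(j:ℚ))) * (x + 2*((k+1:ℕ):ℚ)) := by
      rw [Finset.prod_range_succ]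
    have hxk2 : x + 2*((k+1:ℕ):ℚ) ≠ 0 := hx (k+1) (by simp)
    rw [hQ, hPP]
    have hdf : (Nat.doubleFactorial (2*(k+1)) : ℚ) = (2*(k:ℚ)+2) * (Nat.doubleFactorial (2*k)) := by
      have h3 : 2*(k+1) = 2*k + 2 := by ring
      rw [h3, Nat.doubleFactorial]
      push_cast; ring
    rw [hdf]
    set P := ∏ j ∈ Finset.range (k+1), (x + 2*(j:ℚ)) with hPdef
    set Q := ∏ j ∈ Finset.range (k+1), (x + 2*((j+1:ℕ):ℚ)) with hQdef
    rw [div_sub_div _ _ hP hQ0, div_eq_div_iff (mul_ne_zero hP hQ0) (mul_ne_zero hP hxk2)]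
    push_cast at hrel ⊢
    linear_combination ((Nat.doubleFactorial (2*k) : ℚ) * P) * hrel

/-- For natural numbers `n`, `k` with `2k+1 ≤ n` (and `n ≥ 1`), the identity
`(2k)!! / ∏_{j=0}^{k} (n - 2j) = ∑_{i=0}^{k} (-1)^i C(k,i) / (n - 2k + 2i)`
holds in `ℚ`. -/
theorem double_factorial_sum_identity (n k : ℕ) (hn : 1 ≤ n) (h : 2 * k + 1 ≤ n) :
    (Nat.doubleFactorial (2 * k) : ℚ) / ∏ j ∈ Finset.range (k + 1), ((n : ℚ) - 2 * j)
      = ∑ i ∈ Finset.range (k + 1),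
        (-1) ^ i * (Nat.choose k i : ℚ) / ((n : ℚ) - 2 * k + 2 * i) := by
  have hnz : ∀ j ∈ Finset.range (k+1), ((n:ℚ) - 2*k) + 2*j ≠ 0 := by
    intro j hj
    have hcast : (2*(k:ℚ)+1) ≤ n := by exact_mod_cast h
    have h2 : (0:ℚ) ≤ 2*j := by positivity
    intro hc; linarith
  have key := aux_dfsum k ((n:ℚ) - 2*k) hnz
  have hprod : ∏ j ∈ Finset.range (k+1), (((n:ℚ) - 2*k) + 2*j)
      = ∏ j ∈ Finset.range (k+1), ((n:ℚ) - 2*j) := by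
    rw [← Finset.prod_range_reflect (fun j => ((n:ℚ) - 2*k) + 2*(j:ℚ)) (k+1)]
    apply Finset.prod_congr rfl
    intro j hj
    have hjk : j ≤ k := by simp at hj; omega
    have hc : ((k + 1 - 1 - j : ℕ) : ℚ) = (k:ℚ) - j := by
      have he : k + 1 - 1 - j = k - j := rfl
      rw [he, Nat.cast_sub hjk]
    simp only [hc]
    ring
  rw [← hprod, ← key]
end

section
/- For the geodesic ball B_ρ of radius ρ in the unit sphere Sⁿ, the quermassintegral W_{2k−1}^{Sⁿ}(B_ρ) defined by the recursion W_0 = volume, W_1 = (1/n)·(boundary area), W_k = (1/n)∫_{∂B_ρ} E_{k−1}^{Sⁿ} ds + ((k−1)/(n−k+2)) W_{k−2} equals (ω_{n−1}/n) ∑_{i=0}^{k−1} [(2k−2)!!(n−2k+1)!! / ((2k−2i−2)!!(n−2k+2i+1)!!)] cos^{2k−2i−2}ρ · sin^{n−2k+2i+1}ρ. In particular, for ρ = π/2 one obtains W_{2k−1}^{Sⁿ}(B_{π/2}) = (ω_{n−1}/n)·(2k−2)!!(n−2k+1)!!/(n−1)!!. -/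
open Finset Real Nat

lemma qgb_aux (n : ℕ) (hn : 2 ≤ n) (ω : ℝ) (ρ : ℝ) (hs : 0 < Real.sin ρ)
    (W : ℕ → ℝ)
    (hW1 : W 1 = (1 / (n : ℝ)) * (ω * Real.sin ρ ^ (n - 1)))
    (hWrec : ∀ m : ℕ, 2 ≤ m → m ≤ n →
      W m = (1 / (n : ℝ)) *
            (ω * Real.sin ρ ^ (n - 1) * (Real.cos ρ / Real.sin ρ) ^ (m - 1))
          + (((m : ℝ) - 1) / ((n : ℝ) - (m : ℝ) + 2)) * W (m - 2)) :
    ∀ k : ℕ, 1 ≤ k → 2 * k - 1 ≤ n →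
    W (2 * k - 1) = (ω / n) * ∑ i ∈ Finset.range k,
        ((Nat.doubleFactorial (2 * (k - 1)) : ℝ) *
          (Nat.doubleFactorial (n + 1 - 2 * k) : ℝ) /
          ((Nat.doubleFactorial (2 * (k - 1 - i)) : ℝ) *
            (Nat.doubleFactorial (n + 1 - 2 * k + 2 * i) : ℝ))) *
        Real.cos ρ ^ (2 * (k - 1 - i)) * Real.sin ρ ^ (n + 1 - 2 * k + 2 * i) := by
  intro k hk
  induction k, hk using Nat.le_induction with
  | base =>
    intro _
    have h1 : n + 1 - 2 = n - 1 := by omega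
    have hx : ((Nat.doubleFactorial (n-1) : ℕ) : ℝ) ≠ 0 :=
      Nat.cast_ne_zero.mpr (Nat.doubleFactorial_pos _).ne'
    have hn0 : (n : ℝ) ≠ 0 := by positivity
    simp only [Finset.sum_range_one, Nat.mul_zero, Nat.sub_self, Nat.mul_one, h1,
      Nat.add_zero, Nat.doubleFactorial, Nat.cast_one, pow_zero]
    rw [hW1]
    field_simp
  | succ a ha ih =>
    intro hkn
    obtain ⟨b, rfl⟩ : ∃ b, a = b + 1 := ⟨a - 1, by omega⟩
    have hk2 : 2 * (b + 1) + 1 ≤ n := by omega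
    have hrec := hWrec (2 * (b + 1) + 1) (by omega) hk2
    have h21 : 2 * (b + 1 + 1) - 1 = 2 * (b + 1) + 1 := by omega
    have h22 : 2 * (b + 1) + 1 - 2 = 2 * (b + 1) - 1 := by omega
    have h23 : 2 * (b + 1) + 1 - 1 = 2 * (b + 1) := by omega
    rw [h21, hrec, h22, h23, ih (by omega)]
    -- key sum identity
    have hne : ((Nat.doubleFactorial (n + 1 - 2*(b+1)) : ℕ) : ℝ) ≠ 0 :=
      Nat.cast_ne_zero.mpr (Nat.doubleFactorial_pos _).ne'
    have key : ∑ i ∈ Finset.range (b + 1 + 1),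
        ((Nat.doubleFactorial (2 * (b + 1 + 1 - 1)) : ℝ) *
          (Nat.doubleFactorial (n + 1 - 2 * (b + 1 + 1)) : ℝ) /
          ((Nat.doubleFactorial (2 * (b + 1 + 1 - 1 - i)) : ℝ) *
            (Nat.doubleFactorial (n + 1 - 2 * (b + 1 + 1) + 2 * i) : ℝ))) *
        Real.cos ρ ^ (2 * (b + 1 + 1 - 1 - i)) *
        Real.sin ρ ^ (n + 1 - 2 * (b + 1 + 1) + 2 * i)
        = Real.cos ρ ^ (2 * (b + 1)) * Real.sin ρ ^ (n - 1 - 2 * (b + 1))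
          + ((2 * (b + 1) : ℝ) / ((n + 1 - 2 * (b + 1) : ℕ) : ℝ)) *
            ∑ i ∈ Finset.range (b + 1),
              ((Nat.doubleFactorial (2 * (b + 1 - 1)) : ℝ) *
                (Nat.doubleFactorial (n + 1 - 2 * (b + 1)) : ℝ) /
                ((Nat.doubleFactorial (2 * (b + 1 - 1 - i)) : ℝ) *
                  (Nat.doubleFactorial (n + 1 - 2 * (b + 1) + 2 * i) : ℝ))) *
              Real.cos ρ ^ (2 * (b + 1 - 1 - i)) *
              Real.sin ρ ^ (n + 1 - 2 * (b + 1) + 2 * i) := by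
      rw [Finset.sum_range_succ', Finset.mul_sum]
      rw [add_comm]
      congr 1
      · -- i = 0 term
        have e1 : 2 * (b + 1 + 1 - 1 - 0) = 2 * (b + 1) := by omega
        have e2 : n + 1 - 2 * (b + 1 + 1) + 2 * 0 = n - 1 - 2 * (b + 1) := by omega
        have e3 : 2 * (b + 1 + 1 - 1) = 2 * (b + 1) := by omega
        have e4 : n + 1 - 2 * (b + 1 + 1) = n - 1 - 2 * (b + 1) := by omega
        rw [e1, e2, e3, e4]
        have hx1 : ((Nat.doubleFactorial (2 * (b + 1)) : ℕ) : ℝ) ≠ 0 :=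
          Nat.cast_ne_zero.mpr (Nat.doubleFactorial_pos _).ne'
        have hx2 : ((Nat.doubleFactorial (n - 1 - 2 * (b + 1)) : ℕ) : ℝ) ≠ 0 :=
          Nat.cast_ne_zero.mpr (Nat.doubleFactorial_pos _).ne'
        field_simp
      · apply Finset.sum_congr rfl
        intro j hj
        have e1 : 2 * (b + 1 + 1 - 1) = 2 * b + 2 := by omega
        have e2 : b + 1 + 1 - 1 - (j + 1) = b - j := by omega
        have e2' : b + 1 - 1 - j = b - j := by omega
        have e3 : n + 1 - 2 * (b + 1 + 1) + 2 * (j + 1) = n + 1 - 2 * (b + 1) + 2 * j := by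
          omega
        have e4 : n + 1 - 2 * (b + 1 + 1) = n - 1 - 2 * (b + 1) := by omega
        have e5 : n + 1 - 2 * (b + 1) = n - 1 - 2 * (b + 1) + 2 := by omega
        have e6 : 2 * (b + 1 - 1) = 2 * b := by omega
        rw [e1, e2, e2', e3, e4, e5, e6, Nat.doubleFactorial_add_two,
          Nat.doubleFactorial_add_two]
        have hx1 : ((Nat.doubleFactorial (2 * (b - j)) : ℕ) : ℝ) ≠ 0 :=
          Nat.cast_ne_zero.mpr (Nat.doubleFactorial_pos _).ne'
        have hx2 : ((Nat.doubleFactorial (n - 1 - 2 * (b + 1) + 2 + 2 * j) : ℕ) : ℝ) ≠ 0 :=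
          Nat.cast_ne_zero.mpr (Nat.doubleFactorial_pos _).ne'
        have hx3 : ((n - 1 - 2 * (b + 1) + 2 : ℕ) : ℝ) ≠ 0 := by positivity
        push_cast
        field_simp
    rw [key]
    have hn0 : (n : ℝ) ≠ 0 := by positivity
    have hc : ((n + 1 - 2 * (b + 1) : ℕ) : ℝ) = (n : ℝ) - (2 * (b + 1) : ℝ) + 1 := by
      rw [Nat.cast_sub (by omega : 2 * (b + 1) ≤ n + 1)]
      push_cast; ring
    have hpow : Real.sin ρ ^ (n - 1) =
        Real.sin ρ ^ (n - 1 - 2 * (b + 1)) * Real.sin ρ ^ (2 * (b + 1)) := by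
      rw [← pow_add]; congr 1; omega
    have hden : (n : ℝ) - ((2 * (b + 1) + 1 : ℕ) : ℝ) + 2 = (n : ℝ) - (2 * (b + 1) : ℝ) + 1 := by
      push_cast; ring
    have hdpos : (0 : ℝ) < (n : ℝ) - (2 * (b + 1) : ℝ) + 1 := by
      have : (2 * (b + 1) : ℝ) ≤ (n : ℝ) - 1 := by
        have h := (Nat.cast_le (α := ℝ)).mpr hk2
        push_cast at h ⊢; linarith
      linarith
    rw [hc, hden, div_pow, hpow]
    push_cast
    field_simp
    ring

/-- The quermassintegrals `W_m` of a geodesic ball `B_ρ ⊂ Sⁿ`, characterized by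
`W_0 = volume`, `W_1 = (1/n)·area(∂B_ρ)` and the recursion
`W_m = (1/n)∫_{∂B_ρ} E_{m-1} + ((m−1)/(n−m+2)) W_{m−2}` (where the boundary geodesic
sphere has area `ω_{n−1} sin^{n−1}ρ` and `E_j = cot^j ρ`), satisfy the closed formula
`W_{2k−1} = (ω_{n−1}/n) ∑_{i=0}^{k−1} ((2k−2)!!(n−2k+1)!!/((2k−2i−2)!!(n−2k+2i+1)!!))
cos^{2k−2i−2}ρ sin^{n−2k+2i+1}ρ`; in particular at `ρ = π/2` one gets
`(ω_{n−1}/n)(2k−2)!!(n−2k+1)!!/(n−1)!!`. -/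
theorem quermassintegral_geodesic_ball (n k : ℕ) (hn : 2 ≤ n) (hk : 1 ≤ k)
    (hkn : 2 * k - 1 ≤ n) (ω : ℝ) (hω : 0 < ω) (ρ : ℝ) (hρ : ρ ∈ Set.Ioo 0 π)
    (W : ℕ → ℝ)
    (hW0 : W 0 = ∫ s in (0:ℝ)..ρ, ω * Real.sin s ^ (n - 1))
    (hW1 : W 1 = (1 / (n : ℝ)) * (ω * Real.sin ρ ^ (n - 1)))
    (hWrec : ∀ m : ℕ, 2 ≤ m → m ≤ n →
      W m = (1 / (n : ℝ)) *
            (ω * Real.sin ρ ^ (n - 1) * (Real.cos ρ / Real.sin ρ) ^ (m - 1))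
          + (((m : ℝ) - 1) / ((n : ℝ) - (m : ℝ) + 2)) * W (m - 2)) :
    W (2 * k - 1) = (ω / n) * ∑ i ∈ Finset.range k,
        ((Nat.doubleFactorial (2 * (k - 1)) : ℝ) *
          (Nat.doubleFactorial (n + 1 - 2 * k) : ℝ) /
          ((Nat.doubleFactorial (2 * (k - 1 - i)) : ℝ) *
            (Nat.doubleFactorial (n + 1 - 2 * k + 2 * i) : ℝ))) *
        Real.cos ρ ^ (2 * (k - 1 - i)) * Real.sin ρ ^ (n + 1 - 2 * k + 2 * i) ∧
    (ρ = π / 2 →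
      W (2 * k - 1) = (ω / n) * (Nat.doubleFactorial (2 * (k - 1)) : ℝ) *
        (Nat.doubleFactorial (n + 1 - 2 * k) : ℝ) /
        (Nat.doubleFactorial (n - 1) : ℝ)) := by
  have hs : 0 < Real.sin ρ := Real.sin_pos_of_pos_of_lt_pi hρ.1 hρ.2
  have h1 := qgb_aux n hn ω ρ hs W hW1 hWrec k hk hkn
  refine ⟨h1, ?_⟩
  intro hρ2
  subst hρ2
  rw [h1]
  rw [Finset.sum_eq_single (k - 1)]
  · have e1 : k - 1 - (k - 1) = 0 := by omega
    have e2 : n + 1 - 2 * k + 2 * (k - 1) = n - 1 := by omega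
    rw [e1, e2]
    simp only [Nat.mul_zero, Nat.doubleFactorial, Nat.cast_one, pow_zero,
      Real.sin_pi_div_two, one_pow, one_mul, mul_one]
    ring
  · intro i hi hne
    have hpos : 0 < 2 * (k - 1 - i) := by
      simp only [Finset.mem_range] at hi; omega
    rw [Real.cos_pi_div_two, zero_pow (by omega), mul_zero, zero_mul]
  · intro h
    exact absurd (Finset.mem_range.mpr (by omega)) h
end

section
/- Let n ≥ 3 and let W : [0,T) → ℝ₊ be given data with W_1-quantity f satisfying f' = n f, and let g satisfy g' ≤ (n−2)g − (2(n−2)/(n−1)) f on [0,T). Then the function t ↦ f(t)^{−(n−2)/n} ( g(t) + ((n−2)/(n−1)) f(t) ) is non-increasing on [0,T). -/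
open Real

/-- Coupled differential inequalities: if `f > 0` solves `f' = n f` and
`g' ≤ (n−2)g − (2(n−2)/(n−1)) f` on `[0,T)` with `n ≥ 3`, then
`t ↦ f(t)^{−(n−2)/n} (g(t) + ((n−2)/(n−1)) f(t))` is non-increasing on `[0,T)`. -/
theorem coupled_monotone (n T : ℝ) (hn : 3 ≤ n) (hT : 0 < T)
    (f g g' : ℝ → ℝ)
    (hfpos : ∀ t ∈ Set.Ico (0 : ℝ) T, 0 < f t)
    (hfd : ∀ t ∈ Set.Ico (0 : ℝ) T, HasDerivAt f (n * f t) t)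
    (hgd : ∀ t ∈ Set.Ico (0 : ℝ) T, HasDerivAt g (g' t) t)
    (hgin : ∀ t ∈ Set.Ico (0 : ℝ) T,
      g' t ≤ (n - 2) * g t - (2 * (n - 2) / (n - 1)) * f t) :
    ∀ s ∈ Set.Ico (0 : ℝ) T, ∀ t ∈ Set.Ico (0 : ℝ) T, s ≤ t →
      f t ^ (-(n - 2) / n) * (g t + ((n - 2) / (n - 1)) * f t)
        ≤ f s ^ (-(n - 2) / n) * (g s + ((n - 2) / (n - 1)) * f s) := by
  set p : ℝ := -(n - 2) / n with hp
  set c : ℝ := (n - 2) / (n - 1) with hc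
  have hn0 : (0 : ℝ) < n := by linarith
  have hn1 : (0 : ℝ) < n - 1 := by linarith
  set Q : ℝ → ℝ := fun t => f t ^ p * (g t + c * f t) with hQ
  -- derivative of Q at each point of Ico
  have key : ∀ t ∈ Set.Ico (0 : ℝ) T,
      HasDerivAt Q (f t ^ p * (g' t + c * (n * f t) + p * n * (g t + c * f t))) t := by
    intro t ht
    have hft := hfpos t ht
    have h1 : HasDerivAt (fun y => f y ^ p)
        ((n * f t) * p * f t ^ (p - 1)) t :=
      (hfd t ht).rpow_const (Or.inl (ne_of_gt hft))
    have h2 : HasDerivAt (fun y => g y + c * f y) (g' t + c * (n * f t)) t :=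
      (hgd t ht).add ((hfd t ht).const_mul c)
    have h3 := h1.mul h2
    refine h3.congr_deriv ?_
    have hfp : f t ^ (p - 1) * f t = f t ^ p := by
      rw [← rpow_add_one (ne_of_gt hft) (p - 1)]; ring_nf
    have : (n * f t) * p * f t ^ (p - 1) = n * p * (f t ^ (p - 1) * f t) := by ring
    rw [this, hfp]; ring
  have hQcont : ContinuousOn Q (Set.Ico 0 T) := fun t ht =>
    ((key t ht).continuousAt).continuousWithinAt
  have hanti : AntitoneOn Q (Set.Ico 0 T) := by
    apply antitoneOn_of_deriv_nonpos (convex_Ico 0 T) hQcont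
    · intro t ht
      rw [interior_Ico] at ht
      exact ((key t (Set.Ioo_subset_Ico_self ht)).differentiableAt).differentiableWithinAt
    · intro t ht
      rw [interior_Ico] at ht
      have ht' := Set.Ioo_subset_Ico_self ht
      rw [(key t ht').deriv]
      have hft := hfpos t ht'
      have hfp : 0 < f t ^ p := rpow_pos_of_pos hft p
      have hg := hgin t ht'
      have hpn : p * n = -(n - 2) := by
        rw [hp]; field_simp
      have hbr : g' t + c * (n * f t) + p * n * (g t + c * f t) ≤ 0 := by
        rw [hpn]
        have hcval : c * n - (n - 2) * c = 2 * c := by ring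
        have h2c : 2 * (n - 2) / (n - 1) = 2 * c := by rw [hc]; ring
        rw [h2c] at hg
        nlinarith [hfpos t ht']
      exact mul_nonpos_of_nonneg_of_nonpos (le_of_lt hfp) hbr
  intro s hs t ht hst
  exact hanti hs ht hst
end
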